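/- Let k1 < k2 be positive integers, θ1, θ2, r1, r2 real numbers, and v(x) = r1·cos(k1(x+θ1)) + r2·cos(k2(x+θ2)). If r1 ≠ 0, r2 ≠ 0, and k1·k2·(θ1 − θ2) ∉ π·ℤ, then v is asymmetric, i.e., there is no a ∈ ℝ such that x ↦ v(x+a) is even. -/

import Mathlib

/-!
If `x ↦ v (x + a)` is even, subtracting its values at `x` and `-x` leaves
`2 r₁ sin (k₁ (a + θ₁)) sin (k₁ x) + 2 r₂ sin (k₂ (a + θ₂)) sin (k₂ x) = 0` for all `x`.
Since `k₁² ≠ k₂²`, the functions `sin (k₁ x)` and `sin (k₂ x)` are linearly independent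
(differentiate twice), so `sin (kᵢ (a + θᵢ)) = 0`, i.e. `kᵢ (a + θᵢ) ∈ πℤ`; eliminating `a` gives
`k₁ k₂ (θ₁ - θ₂) ∈ πℤ`.
-/

open Real

lemma hasDerivAt_mul_sin_mul (c b x : ℝ) :
    HasDerivAt (fun y => c * sin (b * y)) (c * b * cos (b * x)) x := by
  have := ((hasDerivAt_sin (b * x)).comp x ((hasDerivAt_id x).const_mul b)).const_mul c
  exact this.congr_deriv (by ring)

lemma hasDerivAt_mul_cos_mul (c b x : ℝ) :
    HasDerivAt (fun y => c * cos (b * y)) (-(c * b * sin (b * x))) x := by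
  have := ((hasDerivAt_cos (b * x)).comp x ((hasDerivAt_id x).const_mul b)).const_mul c
  exact this.congr_deriv (by ring)

lemma eq_zero_of_hasDerivAt_of_forall_eq_zero {f : ℝ → ℝ} {d x : ℝ} (hf : ∀ y, f y = 0)
    (hd : HasDerivAt f d x) : d = 0 := by
  rw [show f = fun _ => 0 from funext hf] at hd
  exact hd.unique (hasDerivAt_const x 0)

lemma eq_zero_of_forall_mul_sin_mul_eq_zero {b c : ℝ} (hb : b ≠ 0)
    (h : ∀ x, c * sin (b * x) = 0) : c = 0 := by
  simpa [mul_div_cancel₀ _ hb] using h (π / 2 / b)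

lemma eq_zero_of_forall_mul_sin_add_mul_sin_eq_zero {b₁ b₂ c₁ c₂ : ℝ} (hb : b₁ ^ 2 ≠ b₂ ^ 2)
    (hb₁ : b₁ ≠ 0) (hb₂ : b₂ ≠ 0) (h : ∀ x, c₁ * sin (b₁ * x) + c₂ * sin (b₂ * x) = 0) :
    c₁ = 0 ∧ c₂ = 0 := by
  have h' : ∀ x, c₁ * b₁ * cos (b₁ * x) + c₂ * b₂ * cos (b₂ * x) = 0 := fun x =>
    eq_zero_of_hasDerivAt_of_forall_eq_zero h
      ((hasDerivAt_mul_sin_mul c₁ b₁ x).add (hasDerivAt_mul_sin_mul c₂ b₂ x))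
  have h'' : ∀ x, -(c₁ * b₁ * b₁ * sin (b₁ * x)) + -(c₂ * b₂ * b₂ * sin (b₂ * x)) = 0 := fun x =>
    eq_zero_of_hasDerivAt_of_forall_eq_zero h'
      ((hasDerivAt_mul_cos_mul (c₁ * b₁) b₁ x).add (hasDerivAt_mul_cos_mul (c₂ * b₂) b₂ x))
  -- `b₂² f + f''` kills the second mode
  have hc₁ : c₁ * (b₂ ^ 2 - b₁ ^ 2) = 0 :=
    eq_zero_of_forall_mul_sin_mul_eq_zero hb₁ fun x => by linear_combination b₂ ^ 2 * h x + h'' x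
  have hc₁ : c₁ = 0 := (mul_eq_zero.mp hc₁).resolve_right (sub_ne_zero.mpr hb.symm)
  refine ⟨hc₁, eq_zero_of_forall_mul_sin_mul_eq_zero hb₂ fun x => ?_⟩
  simpa [hc₁] using h x

lemma cos_mul_neg_add_sub_cos_mul_add (k a θ x : ℝ) :
    cos (k * ((-x + a) + θ)) - cos (k * ((x + a) + θ)) = 2 * sin (k * (a + θ)) * sin (k * x) := by
  rw [show k * ((-x + a) + θ) = k * (a + θ) - k * x by ring,
    show k * ((x + a) + θ) = k * (a + θ) + k * x by ring, cos_sub, cos_add]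
  ring

lemma exists_int_mul_mul_sub_eq_int_mul_pi {k₁ k₂ : ℤ} {α β : ℝ} (hα : sin (k₁ * α) = 0)
    (hβ : sin (k₂ * β) = 0) : ∃ n : ℤ, (k₁ : ℝ) * k₂ * (α - β) = n * π := by
  obtain ⟨m, hm⟩ := sin_eq_zero_iff.mp hα
  obtain ⟨n, hn⟩ := sin_eq_zero_iff.mp hβ
  refine ⟨k₂ * m - k₁ * n, ?_⟩
  push_cast
  linear_combination k₁ * hn - k₂ * hm

theorem two_mode_asymmetric (k1 k2 : ℕ) (hk1 : 0 < k1) (hk : k1 < k2)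
    (r1 r2 θ1 θ2 : ℝ) (hr1 : r1 ≠ 0) (hr2 : r2 ≠ 0)
    (hθ : ¬ ∃ n : ℤ, (k1 : ℝ) * k2 * (θ1 - θ2) = n * Real.pi) :
    ¬ ∃ a : ℝ, ∀ x : ℝ,
      (r1 * Real.cos (k1 * ((-x + a) + θ1)) + r2 * Real.cos (k2 * ((-x + a) + θ2))) =
      (r1 * Real.cos (k1 * ((x + a) + θ1)) + r2 * Real.cos (k2 * ((x + a) + θ2))) := by
  rintro ⟨a, H⟩
  have hk_sq : (k1 : ℝ) ^ 2 ≠ (k2 : ℝ) ^ 2 := by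
    exact_mod_cast (Nat.pow_lt_pow_left hk two_ne_zero).ne
  have hsin : ∀ x, 2 * r1 * sin (k1 * (a + θ1)) * sin (k1 * x)
      + 2 * r2 * sin (k2 * (a + θ2)) * sin (k2 * x) = 0 := fun x => by
    linear_combination H x - r1 * cos_mul_neg_add_sub_cos_mul_add k1 a θ1 x
      - r2 * cos_mul_neg_add_sub_cos_mul_add k2 a θ2 x
  obtain ⟨hc1, hc2⟩ := eq_zero_of_forall_mul_sin_add_mul_sin_eq_zero hk_sq
    (by exact_mod_cast hk1.ne') (by exact_mod_cast (hk1.trans hk).ne') hsin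
  have hs1 : sin ((k1 : ℤ) * (a + θ1)) = 0 := by simpa [hr1] using hc1
  have hs2 : sin ((k2 : ℤ) * (a + θ2)) = 0 := by simpa [hr2] using hc2
  obtain ⟨n, hn⟩ := exists_int_mul_mul_sub_eq_int_mul_pi hs1 hs2
  exact hθ ⟨n, by simpa using hn⟩
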